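/- arXiv:1711.00413 — 2 statements merged into one kernel-verified Lean document; each statement's English description precedes it below -/
import Mathlib

section
/- Let Γ be a finitely generated amenable group with finite generating set S, and let (Λ_n)_{n∈ℕ} be any sequence of finite-index subgroups of Γ such that the sequence of Schreier graphs {Sch(Γ, Λ_n, S)}_{n∈ℕ} is a graph sequence (i.e. the number of cosets [Γ:Λ_n] tends to infinity). Then the graph sequence {Sch(Γ, Λ_n, S)}_{n∈ℕ} has property A. -/
open Filter Topology

/-- A graph sequence: finite connected graphs of uniformly bounded degree whose
number of vertices tends to infinity. -/
structure GraphSeq (V : ℕ → Type*) where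
  G : ∀ n, SimpleGraph (V n)
  finite : ∀ n, Finite (V n)
  connected : ∀ n, (G n).Connected
  degBound : ℕ
  deg_le : ∀ n, ∀ x : V n, ((G n).neighborSet x).ncard ≤ degBound
  card_tendsto : Tendsto (fun n => Nat.card (V n)) atTop atTop

/-- The edge number `e(𝒢) = liminf |E(G_n)|/|V(G_n)|`. -/
noncomputable def GraphSeq.edgeNumber {V : ℕ → Type*} (Gs : GraphSeq V) : ℝ :=
  liminf (fun n => (((Gs.G n).edgeSet.ncard : ℝ)) / (Nat.card (V n) : ℝ)) atTop

/-- Bi-Lipschitz equivalence `𝒢 ≃ ℋ` of graph sequences on the same vertex sets. -/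
def GraphSeq.equivSeq {V : ℕ → Type*} (Gs Hs : GraphSeq V) : Prop :=
  ∃ L : ℕ, 0 < L ∧ ∀ n, ∀ x y : V n,
    (Hs.G n).dist x y ≤ L * (Gs.G n).dist x y ∧
    (Gs.G n).dist x y ≤ L * (Hs.G n).dist x y

/-- The (combinatorial) cost `c(𝒢) = inf { e(ℋ) : ℋ ≃ 𝒢 }`. -/
noncomputable def GraphSeq.cost {V : ℕ → Type*} (Gs : GraphSeq V) : ℝ :=
  sInf { x : ℝ | ∃ Hs : GraphSeq V, Gs.equivSeq Hs ∧ x = Hs.edgeNumber }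

/-- Coarse equivalence of graph sequences: a uniform `(A,A)`-quasi-isometry levelwise. -/
def coarseEquiv {V W : ℕ → Type*} (Gs : GraphSeq V) (Hs : GraphSeq W) : Prop :=
  ∃ A : ℝ, 0 < A ∧ ∀ n, ∃ f : V n → W n,
    (∀ x y : V n,
      ((Gs.G n).dist x y : ℝ) / A - A ≤ ((Hs.G n).dist (f x) (f y) : ℝ) ∧
      ((Hs.G n).dist (f x) (f y) : ℝ) ≤ A * ((Gs.G n).dist x y : ℝ) + A) ∧
    (∀ w : W n, ∃ x : V n, ((Hs.G n).dist (f x) w : ℝ) ≤ A)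

/-- Hyperfiniteness of a family of graphs. -/
def hyperfiniteFam {V : ℕ → Type*} (G : ∀ n, SimpleGraph (V n)) : Prop :=
  ∀ ε : ℝ, 0 < ε → ∃ K : ℕ, 0 < K ∧ ∃ E : ∀ n, Set (Sym2 (V n)),
    (∀ n, E n ⊆ (G n).edgeSet) ∧
    limsup (fun n => (((E n).ncard : ℝ)) / (Nat.card (V n) : ℝ)) atTop < ε ∧
    ∀ n, ∀ x : V n, {y | ((G n).deleteEdges (E n)).Reachable x y}.ncard ≤ K

def GraphSeq.hyperfinite {V : ℕ → Type*} (Gs : GraphSeq V) : Prop :=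
  hyperfiniteFam Gs.G

/-- Property A for a family of graphs. -/
def propertyAFam {V : ℕ → Type*} (G : ∀ n, SimpleGraph (V n)) : Prop :=
  ∀ ε : ℝ, 0 < ε → ∃ S : ℕ, 0 < S ∧ ∀ n, ∃ ξ : V n → V n → ℝ,
    (∀ x, ∑ᶠ y, |ξ x y| = 1) ∧
    (∀ x y, ξ x y ≠ 0 → (G n).dist x y ≤ S) ∧
    (∀ x y, (G n).Adj x y → ∑ᶠ z, |ξ x z - ξ y z| < ε)

def GraphSeq.propertyA {V : ℕ → Type*} (Gs : GraphSeq V) : Prop :=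
  propertyAFam Gs.G

/-- Property almost-A: one may delete a vanishing proportion of vertices to get property A. -/
def GraphSeq.almostA {V : ℕ → Type*} (Gs : GraphSeq V) : Prop :=
  ∃ V' : ∀ n, Set (V n),
    Tendsto (fun n => (((V' n).ncard : ℝ)) / (Nat.card (V n) : ℝ)) atTop (𝓝 0) ∧
    propertyAFam (fun n => (Gs.G n).induce ((V' n)ᶜ))

/-- The set of edges of `G` with exactly one endpoint in `F`. -/
def edgeBoundary {V : Type*} (G : SimpleGraph V) (F : Set V) : Set (Sym2 V) :=
  {e | e ∈ G.edgeSet ∧ ∃ x y, e = s(x, y) ∧ x ∈ F ∧ y ∉ F}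

/-- The Cayley graph of a group with respect to a set `S`. -/
def cayleyGraph (Γ : Type*) [Group Γ] (S : Set Γ) : SimpleGraph Γ :=
  SimpleGraph.fromRel (fun x y => ∃ s ∈ S, y = x * s)

/-- The simple graph underlying an `S`-labelled graph given by label maps `lab`. -/
def labGraph {Γ V : Type*} (S : Set Γ) (lab : Γ → V → V) : SimpleGraph V :=
  SimpleGraph.fromRel (fun x y => ∃ s ∈ S, y = lab s x)

/-- Right multiplication by `s` on the right cosets of `H`. -/
def schreierMul {Γ : Type*} [Group Γ] (H : Subgroup Γ) (s : Γ) :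
    Quotient (QuotientGroup.rightRel H) → Quotient (QuotientGroup.rightRel H) :=
  Quotient.map (fun g => g * s) (fun a b hab => by
    have h := (QuotientGroup.rightRel_apply).mp hab
    exact (QuotientGroup.rightRel_apply).mpr (by
      simpa [mul_assoc] using h))

/-- The Schreier graph `Sch(Γ, H, S)` on the right cosets of `H`. -/
def schreierGraph {Γ : Type*} [Group Γ] (H : Subgroup Γ) (S : Set Γ) :
    SimpleGraph (Quotient (QuotientGroup.rightRel H)) :=
  labGraph S (fun s => schreierMul H s)

/-- The rooted labelled `r`-ball of the labelled graph `lab` at `x` is isomorphic to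
the `r`-ball around the identity in `Cay(Γ, S)`. -/
def ballIso {Γ : Type*} [Group Γ] (S : Set Γ) {V : Type*} (lab : Γ → V → V)
    (x : V) (r : ℕ) : Prop :=
  ∃ f : Γ → V, f 1 = x ∧
    (∀ g g' : Γ, (cayleyGraph Γ S).dist 1 g ≤ r → (cayleyGraph Γ S).dist 1 g' ≤ r →
      f g = f g' → g = g') ∧
    (∀ g : Γ, (cayleyGraph Γ S).dist 1 g < r → ∀ s ∈ S, f (g * s) = lab s (f g)) ∧
    (∀ v : V, (labGraph S lab).dist x v ≤ r →
      ∃ g : Γ, (cayleyGraph Γ S).dist 1 g ≤ r ∧ f g = v)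

/-- Benjamini–Schramm convergence of the `S`-labelled graphs given by `lab` to `Cay(Γ, S)`. -/
def BSConv {Γ : Type*} [Group Γ] (S : Set Γ) {V : ℕ → Type*}
    (lab : ∀ n, Γ → V n → V n) : Prop :=
  ∀ r : ℕ, Tendsto
    (fun n => ((Nat.card {x : V n // ballIso S (lab n) x r} : ℝ)) / (Nat.card (V n) : ℝ))
    atTop (𝓝 1)

/-- A sofic approximation of `Γ`: a graph sequence labelled by `S` which
Benjamini–Schramm converges to `Cay(Γ, S)`. -/
def IsSoficApprox {Γ : Type*} [Group Γ] (S : Set Γ) {V : ℕ → Type*} (Gs : GraphSeq V)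
    (lab : ∀ n, Γ → V n → V n) : Prop :=
  (∀ n, Gs.G n = labGraph S (lab n)) ∧ BSConv S lab

/-- Amenability via Følner sets with respect to the generating set `S`. -/
def FolnerAmenable {Γ : Type*} [Group Γ] (S : Set Γ) : Prop :=
  ∀ ε : ℝ, 0 < ε → ∃ F : Set Γ, F.Finite ∧ F.Nonempty ∧
    ∀ g ∈ S, ((symmDiff ((fun x => g * x) '' F) F).ncard : ℝ) < ε * (F.ncard : ℝ)

open scoped Classical in
/-- The number of `g ∈ G` moving `x` to `z` under the Schreier action. -/
noncomputable def muFn {Γ : Type} [Group Γ] (H : Subgroup Γ) (G : Finset Γ)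
    (x z : Quotient (QuotientGroup.rightRel H)) : ℕ :=
  (G.filter (fun g => schreierMul H g x = z)).card

lemma act_one' {Γ : Type} [Group Γ] (H : Subgroup Γ) (x : Quotient (QuotientGroup.rightRel H)) :
    schreierMul H 1 x = x := by
  induction x using Quotient.inductionOn with
  | h g => simp [schreierMul, mul_one]

lemma act_mul' {Γ : Type} [Group Γ] (H : Subgroup Γ) (f g : Γ)
    (x : Quotient (QuotientGroup.rightRel H)) :
    schreierMul H (f * g) x = schreierMul H g (schreierMul H f x) := by
  induction x using Quotient.inductionOn with
  | h a => simp [schreierMul, mul_assoc]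

lemma walk_bound' {Γ : Type} [Group Γ] {S : Set Γ} (hSgen : Subgroup.closure S = ⊤)
    (f : Γ) : ∃ k : ℕ, ∀ (H : Subgroup Γ) (x : Quotient (QuotientGroup.rightRel H)),
      ∃ w : (schreierGraph H S).Walk x (schreierMul H f x), w.length ≤ k := by
  have hf : f ∈ Subgroup.closure S := hSgen ▸ Subgroup.mem_top f
  induction hf using Subgroup.closure_induction with
  | mem s hs =>
    refine ⟨1, fun H x => ?_⟩
    by_cases h : schreierMul H s x = x
    · exact ⟨(SimpleGraph.Walk.nil).copy rfl h.symm, by simp⟩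
    · have hadj : (schreierGraph H S).Adj x (schreierMul H s x) := by
        rw [schreierGraph, labGraph, SimpleGraph.fromRel_adj]
        exact ⟨fun he => h he.symm, Or.inl ⟨s, hs, rfl⟩⟩
      exact ⟨hadj.toWalk, by simp⟩
  | one =>
    exact ⟨0, fun H x => ⟨(SimpleGraph.Walk.nil).copy rfl (act_one' H x).symm, by simp⟩⟩
  | mul a b ha hb iha ihb =>
    obtain ⟨k₁, h₁⟩ := iha
    obtain ⟨k₂, h₂⟩ := ihb
    refine ⟨k₁ + k₂, fun H x => ?_⟩
    obtain ⟨w₁, hw₁⟩ := h₁ H x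
    obtain ⟨w₂, hw₂⟩ := h₂ H (schreierMul H a x)
    refine ⟨(w₁.append w₂).copy rfl (act_mul' H a b x).symm, ?_⟩
    simpa using Nat.add_le_add hw₁ hw₂
  | inv a ha iha =>
    obtain ⟨k, h⟩ := iha
    refine ⟨k, fun H x => ?_⟩
    obtain ⟨w, hw⟩ := h H (schreierMul H a⁻¹ x)
    have he : schreierMul H a (schreierMul H a⁻¹ x) = x := by
      rw [← act_mul', inv_mul_cancel, act_one']
    exact ⟨(w.copy rfl he).reverse, by simpa using hw⟩

lemma mu_sum {Γ : Type} [Group Γ] (H : Subgroup Γ)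
    [Fintype (Quotient (QuotientGroup.rightRel H))] (G : Finset Γ)
    (x : Quotient (QuotientGroup.rightRel H)) :
    ∑ z, muFn H G x z = G.card := by
  classical
  unfold muFn
  exact (Finset.card_eq_sum_card_fiberwise
    (fun g _ => Finset.mem_univ (schreierMul H g x))).symm

lemma mu_split {Γ : Type} [Group Γ] [DecidableEq Γ] (H : Subgroup Γ) (A B : Finset Γ)
    (x z : Quotient (QuotientGroup.rightRel H)) :
    muFn H A x z = muFn H (A \ B) x z + muFn H (A ∩ B) x z := by
  classical
  unfold muFn
  rw [← Finset.card_union_of_disjoint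
      (Finset.disjoint_filter_filter (Finset.disjoint_sdiff_inter A B)),
    ← Finset.filter_union, Finset.sdiff_union_inter]

lemma mu_symmDiff_le {Γ : Type} [Group Γ] [DecidableEq Γ] (H : Subgroup Γ) (A B : Finset Γ)
    (x z : Quotient (QuotientGroup.rightRel H)) :
    |(muFn H A x z : ℝ) - (muFn H B x z : ℝ)| ≤ (muFn H (symmDiff A B) x z : ℝ) := by
  classical
  have hA := mu_split H A B x z
  have hB := mu_split H B A x z
  have hAB : A ∩ B = B ∩ A := Finset.inter_comm A B
  have hS : muFn H (symmDiff A B) x z = muFn H (A \ B) x z + muFn H (B \ A) x z := by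
    unfold muFn
    rw [symmDiff_def]
    show ((A \ B ∪ B \ A).filter _).card = _
    rw [Finset.filter_union,
      Finset.card_union_of_disjoint (Finset.disjoint_filter_filter disjoint_sdiff_sdiff)]
  rw [hA, hB, hAB, hS]
  push_cast
  have h1 : (0:ℝ) ≤ (muFn H (A \ B) x z : ℝ) := Nat.cast_nonneg _
  have h2 : (0:ℝ) ≤ (muFn H (B \ A) x z : ℝ) := Nat.cast_nonneg _
  rw [abs_sub_le_iff]
  constructor <;> linarith

lemma mu_image {Γ : Type} [Group Γ] [DecidableEq Γ] (H : Subgroup Γ) (s : Γ) (G : Finset Γ)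
    (x z : Quotient (QuotientGroup.rightRel H)) :
    muFn H G (schreierMul H s x) z = muFn H (G.image (fun f => s * f)) x z := by
  classical
  unfold muFn
  rw [Finset.filter_image, Finset.card_image_of_injective _ (mul_right_injective s)]
  congr 1
  apply Finset.filter_congr
  intro f _
  rw [act_mul']

/-- If a finitely generated group is amenable, then any graph sequence of Schreier graphs
of finite-index subgroups of it has property A. -/
theorem stmt11 {Γ : Type} [Group Γ]
    (S : Set Γ) (hSfin : S.Finite) (hSgen : Subgroup.closure S = ⊤)
    (ham : FolnerAmenable S)
    (Λ : ℕ → Subgroup Γ) (hfi : ∀ n, (Λ n).FiniteIndex)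
    (Gs : GraphSeq (fun n => Quotient (QuotientGroup.rightRel (Λ n))))
    (hGs : ∀ n, Gs.G n = schreierGraph (Λ n) S) :
    Gs.propertyA := by
  intro ε hε
  classical
  obtain ⟨F, hFfin, hFne, hFol⟩ := ham ε hε
  choose k hk using fun f : Γ => walk_bound' hSgen f
  set F' : Finset Γ := hFfin.toFinset with hF'def
  have hF'ne : F'.Nonempty := (Set.Finite.toFinset_nonempty hFfin).mpr hFne
  have hcpos : (0:ℝ) < (F'.card : ℝ) := by exact_mod_cast Finset.card_pos.mpr hF'ne
  refine ⟨max (F'.sup k) 1, lt_of_lt_of_le one_pos (le_max_right _ 1), fun n => ?_⟩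
  haveI : Finite (Quotient (QuotientGroup.rightRel (Λ n))) := Gs.finite n
  haveI : Fintype (Quotient (QuotientGroup.rightRel (Λ n))) := Fintype.ofFinite _
  refine ⟨fun x y => (muFn (Λ n) F' x y : ℝ) / (F'.card : ℝ), ?_, ?_, ?_⟩
  · intro x
    rw [finsum_eq_sum_of_fintype]
    have habs : ∀ z, |(muFn (Λ n) F' x z : ℝ) / (F'.card : ℝ)|
        = (muFn (Λ n) F' x z : ℝ) / (F'.card : ℝ) :=
      fun z => abs_of_nonneg (div_nonneg (Nat.cast_nonneg _) (Nat.cast_nonneg _))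
    simp_rw [habs]
    rw [← Finset.sum_div, ← Nat.cast_sum, mu_sum, div_self (ne_of_gt hcpos)]
  · intro x y hxy
    have hne : muFn (Λ n) F' x y ≠ 0 := by
      intro h
      apply hxy
      simp [h]
    obtain ⟨f, hfF, hfx⟩ : ∃ f ∈ F', schreierMul (Λ n) f x = y := by
      by_contra hcon
      push_neg at hcon
      apply hne
      unfold muFn
      rw [Finset.card_eq_zero, Finset.filter_eq_empty_iff]
      exact fun g hg => hcon g hg
    obtain ⟨w, hw⟩ := hk f (Λ n) x
    rw [hGs n]
    calc (schreierGraph (Λ n) S).dist x y ≤ w.length := by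
          rw [← hfx]; exact SimpleGraph.dist_le w
      _ ≤ F'.sup k := le_trans hw (Finset.le_sup hfF)
      _ ≤ max (F'.sup k) 1 := le_max_left _ _
  · have key : ∀ s ∈ S, ∀ x : Quotient (QuotientGroup.rightRel (Λ n)),
        ∑ z, |(muFn (Λ n) F' (schreierMul (Λ n) s x) z : ℝ) / (F'.card : ℝ)
          - (muFn (Λ n) F' x z : ℝ) / (F'.card : ℝ)| < ε := by
      intro s hs x
      set Δ : Finset Γ := symmDiff (F'.image (fun f => s * f)) F' with hΔdef
      have hnum : ∀ z, |(muFn (Λ n) F' (schreierMul (Λ n) s x) z : ℝ)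
          - (muFn (Λ n) F' x z : ℝ)| ≤ (muFn (Λ n) Δ x z : ℝ) := by
        intro z
        rw [mu_image]
        exact mu_symmDiff_le (Λ n) _ F' x z
      have hΔcard : ((symmDiff ((fun x => s * x) '' F) F).ncard : ℝ) = (Δ.card : ℝ) := by
        congr 1
        rw [← Set.ncard_coe_finset Δ]
        congr 1
        rw [hΔdef, Finset.coe_symmDiff, Finset.coe_image, hF'def, Set.Finite.coe_toFinset]
      have hFc : (F.ncard : ℝ) = (F'.card : ℝ) := by
        rw [hF'def, Set.ncard_eq_toFinset_card F hFfin]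
      have hfol := hFol s hs
      rw [hΔcard, hFc] at hfol
      calc ∑ z, |(muFn (Λ n) F' (schreierMul (Λ n) s x) z : ℝ) / (F'.card : ℝ)
            - (muFn (Λ n) F' x z : ℝ) / (F'.card : ℝ)|
          = ∑ z, |(muFn (Λ n) F' (schreierMul (Λ n) s x) z : ℝ)
            - (muFn (Λ n) F' x z : ℝ)| / (F'.card : ℝ) := by
            refine Finset.sum_congr rfl fun z _ => ?_
            rw [div_sub_div_same, abs_div, abs_of_pos hcpos]
        _ ≤ ∑ z, (muFn (Λ n) Δ x z : ℝ) / (F'.card : ℝ) := by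
            refine Finset.sum_le_sum fun z _ => ?_
            exact div_le_div_of_nonneg_right (hnum z) hcpos.le
        _ = (Δ.card : ℝ) / (F'.card : ℝ) := by
            rw [← Finset.sum_div, ← Nat.cast_sum, mu_sum]
        _ < ε := by
            rw [div_lt_iff₀ hcpos]
            linarith
    intro x y hadj
    rw [finsum_eq_sum_of_fintype]
    rw [hGs n, schreierGraph, labGraph, SimpleGraph.fromRel_adj] at hadj
    obtain ⟨hne, h | h⟩ := hadj
    · obtain ⟨s, hs, rfl⟩ := h
      have hk2 := key s hs x
      calc ∑ z, |(muFn (Λ n) F' x z : ℝ) / (F'.card : ℝ)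
            - (muFn (Λ n) F' (schreierMul (Λ n) s x) z : ℝ) / (F'.card : ℝ)|
          = ∑ z, |(muFn (Λ n) F' (schreierMul (Λ n) s x) z : ℝ) / (F'.card : ℝ)
            - (muFn (Λ n) F' x z : ℝ) / (F'.card : ℝ)| := by
            exact Finset.sum_congr rfl fun z _ => abs_sub_comm _ _
        _ < ε := hk2
    · obtain ⟨s, hs, rfl⟩ := h
      exact key s hs y
end

section
/- Let Γ be a finitely generated group with finite generating set S and let 𝒢 = {G_n}_{n∈ℕ} be a sofic approximation of Γ. If 𝒢 is hyperfinite, then Γ is amenable. -/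
/-!
Fix `ε` and a hyperfinite decomposition: deleting a set `E` of `< (ε/8)|V|` edges leaves
components of at most `K` vertices. By Benjamini–Schramm convergence, for large `n` at least half
of the vertices `x` see, within distance `K`, only vertices rooting a copy of the
`(K + 1)`-ball of `Cay(Γ, S)` and having a unique `lab s`-preimage for each `s ∈ S`.
Averaging `|∂C| / |C|` over the components `C` finds such an `x` whose component has
`|∂C| < (ε/2)|C|`. The ball isomorphism at `x` lifts `C` bijectively to `W ⊆ Γ`, and every
`s`-edge leaving `W` is sent to a distinct edge of `∂C`, so `F = W⁻¹` is an `ε`-Følner set.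
-/

open Filter Topology

open SimpleGraph

section Counting

variable {α β : Type*}

theorem Set.Finite.ncard_biUnion_le_mul {ι : Type*} {t : Set ι} (ht : t.Finite)
    (s : ι → Set α) {c : ℕ} (h : ∀ i ∈ t, (s i).ncard ≤ c) :
    (⋃ i ∈ t, s i).ncard ≤ t.ncard * c := by
  refine (ht.ncard_biUnion_le s).trans ?_
  rw [finsum_mem_eq_finite_toFinset_sum _ ht, Set.ncard_eq_toFinset_card t ht, ← smul_eq_mul]
  exact Finset.sum_le_card_nsmul _ _ _ fun i hi => h i (ht.mem_toFinset.mp hi)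

theorem Set.ncard_symmDiff_le_two_mul_ncard_sdiff {s t : Set α} (hs : s.Finite) (ht : t.Finite)
    (h : s.ncard = t.ncard) : (symmDiff s t).ncard ≤ 2 * (t \ s).ncard := by
  have h₁ := Set.ncard_sdiff_add_ncard s t hs ht
  have h₂ := Set.ncard_sdiff_add_ncard t s ht hs
  rw [Set.union_comm] at h₂
  calc (symmDiff s t).ncard ≤ (s \ t).ncard + (t \ s).ncard := by
        rw [Set.symmDiff_def]; exact Set.ncard_union_le _ _
    _ = 2 * (t \ s).ncard := by omega

theorem ncard_setOf_not_subsingleton_preimage_add_ncard_range_le [Finite α] (f : α → β) :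
    {b | ¬(f ⁻¹' {b}).Subsingleton}.ncard + (Set.range f).ncard ≤ Nat.card α := by
  -- `T` picks one preimage of each value; a value with two preimages is hit from outside `T`.
  set T := Set.range (Set.rangeSplitting f)
  have hT : T.ncard = (Set.range f).ncard := by
    rw [Set.ncard_range_of_injective (Set.rangeSplitting_injective f), Nat.card_coe_set_eq]
  have hM : {b | ¬(f ⁻¹' {b}).Subsingleton} ⊆ f '' Tᶜ := by
    intro b hb
    obtain ⟨v, hv, w, hw, hvw⟩ := Set.not_subsingleton_iff.mp hb
    have hout : ∀ a (ha : f a = b), a ≠ Set.rangeSplitting f ⟨b, a, ha⟩ → a ∈ Tᶜ := by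
      rintro a rfl ha ⟨c, hca⟩
      obtain rfl : c = ⟨f a, a, rfl⟩ :=
        Subtype.ext ((Set.apply_rangeSplitting f c).symm.trans (congrArg f hca))
      exact ha hca.symm
    by_cases hv' : v = Set.rangeSplitting f ⟨b, v, hv⟩
    · refine ⟨w, hout w hw fun hw' => hvw ?_, hw⟩
      rw [hv', hw']
    · exact ⟨v, hout v hv hv', hv⟩
  calc _ ≤ Tᶜ.ncard + T.ncard :=
        add_le_add ((Set.ncard_le_ncard hM).trans (Set.ncard_image_le (Set.toFinite _))) hT.ge
    _ = Nat.card α := Set.ncard_compl_add_ncard T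

end Counting

namespace SimpleGraph

variable {V : Type*}

theorem ncard_edgeSet_le_mul [Finite V] (G : SimpleGraph V) {D : ℕ}
    (hD : ∀ x, (G.neighborSet x).ncard ≤ D) : G.edgeSet.ncard ≤ Nat.card V * D := by
  have hsub :
      G.edgeSet ⊆ ⋃ x ∈ (Set.univ : Set V), (fun y => s(x, y)) '' G.neighborSet x := by
    intro e he
    induction e using Sym2.ind with
    | _ x y => exact Set.mem_biUnion (Set.mem_univ x) ⟨y, he, rfl⟩
  calc G.edgeSet.ncard ≤ _ := Set.ncard_le_ncard hsub (Set.toFinite _)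
    _ ≤ (Set.univ : Set V).ncard * D :=
        Set.finite_univ.ncard_biUnion_le_mul _ fun x _ =>
          (Set.ncard_image_le (Set.toFinite _)).trans (hD x)
    _ = Nat.card V * D := by rw [Set.ncard_univ]

theorem ncard_ball_le_pow [Finite V] (G : SimpleGraph V) {D : ℕ}
    (hD : ∀ x, (G.neighborSet x).ncard ≤ D) (c : V) (m : ℕ) :
    (G.ball c m).ncard ≤ (D + 1) ^ m := by
  induction m generalizing c with
  | zero => simp
  | succ m ih =>
    have hsub : G.ball c ↑(m + 1) ⊆ {c} ∪ ⋃ z ∈ G.neighborSet c, G.ball z m := by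
      intro v hv
      rw [mem_ball, edist_comm] at hv
      obtain ⟨p, hp⟩ :=
        (reachable_of_edist_ne_top (ne_top_of_lt hv)).exists_walk_length_eq_edist
      cases p with
      | nil => exact Or.inl rfl
      | cons hadj q =>
        refine Or.inr (Set.mem_biUnion hadj ?_)
        rw [mem_ball, edist_comm]
        refine (edist_le q).trans_lt ?_
        rw [← hp, Walk.length_cons] at hv
        have hlt : q.length + 1 < m + 1 := by exact_mod_cast hv
        exact_mod_cast Nat.lt_of_succ_lt_succ hlt
    calc (G.ball c ↑(m + 1)).ncard
        ≤ ({c} : Set V).ncard + (⋃ z ∈ G.neighborSet c, G.ball z m).ncard :=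
          (Set.ncard_le_ncard hsub (Set.toFinite _)).trans (Set.ncard_union_le _ _)
      _ ≤ 1 + D * (D + 1) ^ m := by
          rw [Set.ncard_singleton]
          exact Nat.add_le_add_left (((Set.toFinite _).ncard_biUnion_le_mul _ fun z _ => ih z).trans
            (Nat.mul_le_mul_right _ (hD c))) 1
      _ ≤ (D + 1) ^ (m + 1) := by
          rw [pow_succ]; nlinarith [Nat.one_le_pow m (D + 1) (Nat.succ_pos D)]

theorem Reachable.exists_walk_length_lt_ncard [Finite V] {H : SimpleGraph V} {x v : V}
    (h : H.Reachable x v) : ∃ p : H.Walk v x, p.length < {y | H.Reachable x y}.ncard := by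
  classical
  obtain ⟨p, hp, -⟩ := h.symm.exists_path_of_dist
  refine ⟨p, ?_⟩
  have hsupp : (p.support.toFinset : Set V) ⊆ {y | H.Reachable x y} := fun y hy =>
    ⟨(p.dropUntil y (List.mem_toFinset.mp hy)).reverse⟩
  have hcard := Set.ncard_le_ncard hsupp
  rw [Set.ncard_coe_finset, List.toFinset_card_of_nodup hp.support_nodup,
    Walk.length_support] at hcard
  omega

theorem Reachable.mem_ball_ncard [Finite V] {G H : SimpleGraph V} (hH : H ≤ G) {x u : V}
    (h : H.Reachable x u) : u ∈ G.ball x {y | H.Reachable x y}.ncard := by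
  obtain ⟨p, hp⟩ := h.exists_walk_length_lt_ncard
  exact (edist_le (p.mapLe hH)).trans_lt (by rw [Walk.length_mapLe]; exact_mod_cast hp)

open Classical in
theorem sum_ite_reachable_inv_ncard [Fintype V] (H : SimpleGraph V) (a : V) :
    ∑ x, (if H.Reachable x a then ({y | H.Reachable x y}.ncard : ℝ)⁻¹ else 0) = 1 := by
  have hcomp : ∀ x, H.Reachable x a → {y | H.Reachable x y} = {y | H.Reachable a y} :=
    fun x hx => Set.ext fun y => ⟨hx.symm.trans, hx.trans⟩
  have hfilter : Finset.univ.filter (H.Reachable · a) = {y | H.Reachable a y}.toFinset := by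
    ext y; simpa using ⟨Reachable.symm, Reachable.symm⟩
  have hpos : ({y | H.Reachable a y}.ncard : ℝ) ≠ 0 := by
    exact_mod_cast (Set.ncard_pos (Set.toFinite _)).mpr ⟨a, Reachable.refl a⟩ |>.ne'
  rw [← Finset.sum_filter, Finset.sum_congr rfl fun x hx => by
      rw [hcomp x (Finset.mem_filter.mp hx).2], Finset.sum_const, nsmul_eq_mul, hfilter,
    ← Set.ncard_eq_toFinset_card', mul_inv_cancel₀ hpos]

theorem sum_ncard_edges_meeting_div_le [Fintype V] (H : SimpleGraph V) (E : Set (Sym2 V)) :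
    ∑ x, ({e ∈ E | ∃ a ∈ e, H.Reachable x a}.ncard : ℝ) / {y | H.Reachable x y}.ncard
      ≤ 2 * E.ncard := by
  classical
  set w : V → ℝ := fun x => ({y | H.Reachable x y}.ncard : ℝ)⁻¹
  have hrow : ∀ x,
      ({e ∈ E | ∃ a ∈ e, H.Reachable x a}.ncard : ℝ) / {y | H.Reachable x y}.ncard
        = ∑ e ∈ E.toFinset, if ∃ a ∈ e, H.Reachable x a then w x else 0 := by
    intro x
    rw [← Finset.sum_filter, Finset.sum_const, nsmul_eq_mul, div_eq_mul_inv,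
      Set.ncard_eq_toFinset_card']
    congr 3
    ext e; simp
  have hcol : ∀ e : Sym2 V, ∑ x, (if ∃ a ∈ e, H.Reachable x a then w x else 0) ≤ 2 := by
    intro e
    induction e using Sym2.ind with
    | _ a b =>
      calc ∑ x, (if ∃ c ∈ s(a, b), H.Reachable x c then w x else 0)
          ≤ ∑ x, ((if H.Reachable x a then w x else 0)
              + if H.Reachable x b then w x else 0) := by
            refine Finset.sum_le_sum fun x _ => ?_
            have : 0 ≤ w x := inv_nonneg.mpr (Nat.cast_nonneg _)
            split_ifs <;> simp_all
        _ = 2 := by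
            rw [Finset.sum_add_distrib, sum_ite_reachable_inv_ncard, sum_ite_reachable_inv_ncard]
            norm_num
  calc _ = ∑ e ∈ E.toFinset, ∑ x, (if ∃ a ∈ e, H.Reachable x a then w x else 0) := by
        simp_rw [hrow]; exact Finset.sum_comm
    _ ≤ ∑ _e ∈ E.toFinset, (2 : ℝ) := Finset.sum_le_sum fun e _ => hcol e
    _ = 2 * E.ncard := by
        rw [Finset.sum_const, nsmul_eq_mul, Set.ncard_eq_toFinset_card', mul_comm]

theorem edgeBoundary_reachable_deleteEdges_subset (G : SimpleGraph V) (E : Set (Sym2 V)) (x : V) :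
    edgeBoundary G {y | (G.deleteEdges E).Reachable x y}
      ⊆ {e ∈ E | ∃ a ∈ e, (G.deleteEdges E).Reachable x a} := by
  rintro _ ⟨he, a, b, rfl, ha, hb⟩
  refine ⟨by_contra fun hE => hb (ha.trans (deleteEdges_adj.mpr ⟨he, hE⟩).reachable), a,
    Sym2.mem_mk_left a b, ha⟩

theorem exists_mem_ncard_edgeBoundary_mul_le [Finite V] (G : SimpleGraph V) (E : Set (Sym2 V))
    {X : Set V} (hX : X.Nonempty) :
    ∃ x ∈ X, ((edgeBoundary G {y | (G.deleteEdges E).Reachable x y}).ncard : ℝ) * X.ncard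
      ≤ 2 * E.ncard * {y | (G.deleteEdges E).Reachable x y}.ncard := by
  classical
  have := Fintype.ofFinite V
  set H := G.deleteEdges E
  by_contra! hlarge
  have hXpos : (0 : ℝ) < X.ncard := by exact_mod_cast (Set.ncard_pos (Set.toFinite X)).mpr hX
  have hterm : ∀ x ∈ X, 2 * E.ncard / X.ncard
      < ({e ∈ E | ∃ a ∈ e, H.Reachable x a}.ncard : ℝ) / {y | H.Reachable x y}.ncard := by
    intro x hx
    have hCpos : (0 : ℝ) < {y | H.Reachable x y}.ncard := by
      exact_mod_cast (Set.ncard_pos (Set.toFinite _)).mpr ⟨x, Reachable.refl x⟩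
    have hsub : ((edgeBoundary G {y | H.Reachable x y}).ncard : ℝ)
        ≤ {e ∈ E | ∃ a ∈ e, H.Reachable x a}.ncard := by
      exact_mod_cast Set.ncard_le_ncard (edgeBoundary_reachable_deleteEdges_subset G E x)
    rw [div_lt_div_iff₀ hXpos hCpos]
    nlinarith [hlarge x hx]
  have hsum := sum_ncard_edges_meeting_div_le H E
  have hX' : X.toFinset.Nonempty := Set.toFinset_nonempty.mpr hX
  have hlt : (2 * E.ncard : ℝ) < ∑ x, ({e ∈ E | ∃ a ∈ e, H.Reachable x a}.ncard : ℝ)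
      / {y | H.Reachable x y}.ncard := calc
    (2 * E.ncard : ℝ) = ∑ _x ∈ X.toFinset, 2 * (E.ncard : ℝ) / X.ncard := by
        rw [Finset.sum_const, nsmul_eq_mul, ← Set.ncard_eq_toFinset_card']
        field_simp
    _ < ∑ x ∈ X.toFinset, ({e ∈ E | ∃ a ∈ e, H.Reachable x a}.ncard : ℝ)
          / {y | H.Reachable x y}.ncard :=
        Finset.sum_lt_sum_of_nonempty hX' fun x hx => hterm x (Set.mem_toFinset.mp hx)
    _ ≤ _ := Finset.sum_le_sum_of_subset_of_nonneg (Finset.subset_univ _)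
        fun _ _ _ => by positivity
  linarith

end SimpleGraph

section Lift

open scoped Pointwise

variable {Γ : Type*} [Group Γ] {S : Set Γ} {V : Type*} {lab : Γ → V → V}

theorem cayleyGraph_adj_mul {s : Γ} (hs : s ∈ S) (hs1 : s ≠ 1) (g : Γ) :
    (cayleyGraph Γ S).Adj g (g * s) :=
  (fromRel_adj _ _ _).mpr ⟨by simpa [eq_comm] using hs1, Or.inl ⟨s, hs, rfl⟩⟩

theorem cayleyGraph_dist_mul_le {s : Γ} (hs : s ∈ S) (g : Γ) :
    (cayleyGraph Γ S).dist 1 (g * s) ≤ (cayleyGraph Γ S).dist 1 g + 1 := by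
  rcases eq_or_ne s 1 with rfl | hs1
  · simp
  · have hadj := cayleyGraph_adj_mul hs hs1 g
    rw [← dist_eq_one_iff_adj.mpr hadj]
    exact hadj.reachable.dist_triangle_right 1

theorem cayleyGraph_dist_mul_inv_le {s : Γ} (hs : s ∈ S) (g : Γ) :
    (cayleyGraph Γ S).dist 1 (g * s⁻¹) ≤ (cayleyGraph Γ S).dist 1 g + 1 := by
  rcases eq_or_ne s 1 with rfl | hs1
  · simp
  · have hadj : (cayleyGraph Γ S).Adj g (g * s⁻¹) := by
      simpa using (cayleyGraph_adj_mul hs hs1 (g * s⁻¹)).symm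
    rw [← dist_eq_one_iff_adj.mpr hadj]
    exact hadj.reachable.dist_triangle_right 1

theorem ballIso.mem_range {u : V} {r : ℕ} (h : ballIso S lab u r) (hr : 1 < r) {s : Γ}
    (hs : s ∈ S) : u ∈ Set.range (lab s) := by
  obtain ⟨f, hf1, -, hf, -⟩ := h
  have hs' : (cayleyGraph Γ S).dist 1 s⁻¹ < r := by
    simpa using (cayleyGraph_dist_mul_inv_le hs 1).trans_lt (by simpa using hr)
  exact ⟨f s⁻¹, by rw [← hf _ hs' s hs, inv_mul_cancel, hf1]⟩

-- Backward edges `u = lab s v` lift only because `v` is the unique `lab s`-preimage of `u`.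
theorem exists_lift_of_walk {f : Γ → V} {x₀ : V} {R : ℕ} (hf1 : f 1 = x₀)
    (hf : ∀ g, (cayleyGraph Γ S).dist 1 g < R → ∀ s ∈ S, f (g * s) = lab s (f g))
    {v : V} (p : (labGraph S lab).Walk v x₀) (hpR : p.length < R)
    (hinj : ∀ u ∈ p.support, ∀ s ∈ S, (lab s ⁻¹' {u}).Subsingleton) :
    ∃ g, (cayleyGraph Γ S).dist 1 g ≤ p.length ∧ f g = v := by
  induction p with
  | nil => exact ⟨1, by simp, hf1⟩
  | cons hadj q ih =>
    rw [Walk.length_cons] at hpR ⊢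
    obtain ⟨g, hg, hgu⟩ := ih hf1 (by omega) fun u hu => hinj u (by simp [hu])
    obtain ⟨-, ⟨s, hs, hu⟩ | ⟨s, hs, hv⟩⟩ := (fromRel_adj _ _ _).mp hadj
    · have hgs := cayleyGraph_dist_mul_inv_le hs g
      refine ⟨g * s⁻¹, by omega, hinj _ (by simp) s hs ?_ hu.symm⟩
      rw [Set.mem_preimage, Set.mem_singleton_iff, ← hf _ (by omega) s hs, inv_mul_cancel_right,
        hgu]
    · exact ⟨g * s, (cayleyGraph_dist_mul_le hs g).trans (by omega),
        by rw [hf g (by omega) s hs, hgu, hv]⟩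

theorem exists_ncard_symmDiff_le_edgeBoundary [Finite V] {H : SimpleGraph V} (hH : H ≤ labGraph S lab)
    {x₀ : V} {R : ℕ} (hball : ballIso S lab x₀ R) (hCR : {y | H.Reachable x₀ y}.ncard ≤ R)
    (hinj : ∀ u, H.Reachable x₀ u → ∀ s ∈ S, (lab s ⁻¹' {u}).Subsingleton) :
    ∃ F : Set Γ, F.Finite ∧ F.ncard = {y | H.Reachable x₀ y}.ncard ∧ ∀ s ∈ S,
      (symmDiff ((fun x => s * x) '' F) F).ncard
        ≤ 2 * (edgeBoundary (labGraph S lab) {y | H.Reachable x₀ y}).ncard := by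
  classical
  obtain ⟨f, hf1, hfinj, hf, -⟩ := hball
  set C := {y | H.Reachable x₀ y}
  set W : Set Γ := {g | (cayleyGraph Γ S).dist 1 g < R ∧ f g ∈ C}
  have hlift : ∀ v ∈ C, ∃ g ∈ W, f g = v := by
    intro v hv
    obtain ⟨p, hp⟩ := Reachable.exists_walk_length_lt_ncard hv
    replace hp : p.length < R := hp.trans_le hCR
    obtain ⟨g, hg, rfl⟩ := exists_lift_of_walk hf1 hf (p.mapLe hH) (by simpa using hp)
      fun u hu => hinj u ⟨(p.dropUntil u (by simpa using hu)).reverse⟩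
    exact ⟨g, ⟨by simp at hg; omega, hv⟩, rfl⟩
  have hWinj : Set.InjOn f W := fun g hg g' hg' => hfinj g g' hg.1.le hg'.1.le
  have hmemW : ∀ g, (cayleyGraph Γ S).dist 1 g ≤ R → f g ∈ C → g ∈ W := by
    intro g hg hgC
    obtain ⟨g', hg', hfg'⟩ := hlift _ hgC
    rwa [hfinj g g' hg hg'.1.le hfg'.symm]
  have hWC : f '' W = C := Set.Subset.antisymm (Set.image_subset_iff.mpr fun g hg => hg.2)
    fun v hv => hlift v hv
  have hWfin : W.Finite := Set.Finite.of_finite_image (hWC ▸ Set.toFinite C) hWinj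
  refine ⟨W⁻¹, hWfin.inv, by rw [Set.ncard_inv, ← hWC, hWinj.ncard_image], fun s hs => ?_⟩
  refine (Set.ncard_symmDiff_le_two_mul_ncard_sdiff (hWfin.inv.image _) hWfin.inv
    (Set.ncard_image_of_injective _ (mul_right_injective s))).trans (Nat.mul_le_mul_left 2 ?_)
  -- `x ∈ W⁻¹ \ s W⁻¹` gives the edge of `C` leaving `f x⁻¹` with label `s`
  have hout : ∀ x ∈ W⁻¹ \ (fun x => s * x) '' W⁻¹,
      x⁻¹ ∈ W ∧ f (x⁻¹ * s) ∉ C ∧ f (x⁻¹ * s) = lab s (f x⁻¹) := by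
    rintro x ⟨hx, hsx⟩
    refine ⟨hx, fun hC => hsx ⟨s⁻¹ * x, ?_, by group⟩, hf _ hx.1 s hs⟩
    simpa using hmemW _ ((cayleyGraph_dist_mul_le hs _).trans (by have := hx.1; omega)) hC
  refine Set.ncard_le_ncard_of_injOn (fun x => s(f x⁻¹, f (x⁻¹ * s))) ?_ ?_ (Set.toFinite _)
  · intro x hx
    obtain ⟨hxW, hxs, hlab⟩ := hout x hx
    have hadj : (labGraph S lab).Adj (f x⁻¹) (f (x⁻¹ * s)) :=
      (fromRel_adj _ _ _).mpr ⟨fun h => hxs (h ▸ hxW.2), Or.inl ⟨s, hs, hlab⟩⟩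
    exact ⟨hadj, _, _, rfl, hxW.2, hxs⟩
  · intro x₁ hx₁ x₂ hx₂ he
    obtain ⟨hW₁, -, -⟩ := hout x₁ hx₁
    obtain ⟨hW₂, hs₂, -⟩ := hout x₂ hx₂
    rcases Sym2.eq_iff.mp he with ⟨h, -⟩ | ⟨h, -⟩
    · exact inv_injective (hWinj hW₁ hW₂ h)
    · exact absurd (h ▸ hW₁.2) hs₂

end Lift

section GoodCore

variable {Γ : Type*} [Group Γ] {S : Set Γ} {V : Type*}

-- The maps `lab s` are arbitrary, not permutations: the second clause is what lets walks lift.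
def IsGoodVertex (S : Set Γ) (lab : Γ → V → V) (r : ℕ) (u : V) : Prop :=
  ballIso S lab u r ∧ ∀ s ∈ S, (lab s ⁻¹' {u}).Subsingleton

def goodCore (S : Set Γ) (lab : Γ → V → V) (r : ℕ) : Set V :=
  {x | ∀ u ∈ (labGraph S lab).ball x r, IsGoodVertex S lab r u}

variable {lab : Γ → V → V} {r : ℕ}

theorem ncard_not_isGoodVertex_le [Finite V] (hS : S.Finite) (hr : 1 < r) :
    {u | ¬IsGoodVertex S lab r u}.ncard ≤ (1 + S.ncard) * {u | ¬ballIso S lab u r}.ncard := by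
  set B := {u | ¬ballIso S lab u r}
  have hsub : {u | ¬IsGoodVertex S lab r u}
      ⊆ B ∪ ⋃ s ∈ S, {u | ¬(lab s ⁻¹' {u}).Subsingleton} := by
    intro u hu
    by_cases hball : ballIso S lab u r
    · obtain ⟨s, hs, hu⟩ : ∃ s ∈ S, ¬(lab s ⁻¹' {u}).Subsingleton := by
        simpa [IsGoodVertex, hball] using hu
      exact Or.inr (Set.mem_biUnion hs hu)
    · exact Or.inl hball
  -- a fibre of `lab s` with two points forces a vertex outside its range, and those are bad
  have hfib : ∀ s ∈ S, {u | ¬(lab s ⁻¹' {u}).Subsingleton}.ncard ≤ B.ncard := by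
    intro s hs
    have hrange : (Set.range (lab s))ᶜ ⊆ B := fun u hu hball => hu (hball.mem_range hr hs)
    have h₁ := ncard_setOf_not_subsingleton_preimage_add_ncard_range_le (lab s)
    have h₂ := Set.ncard_add_ncard_compl (Set.range (lab s))
    have h₃ := Set.ncard_le_ncard hrange
    omega
  calc _ ≤ B.ncard + (⋃ s ∈ S, {u | ¬(lab s ⁻¹' {u}).Subsingleton}).ncard :=
        (Set.ncard_le_ncard hsub).trans (Set.ncard_union_le _ _)
    _ ≤ B.ncard + S.ncard * B.ncard := Nat.add_le_add_left (hS.ncard_biUnion_le_mul _ hfib) _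
    _ = (1 + S.ncard) * B.ncard := by ring

theorem ncard_goodCore_compl_le [Finite V] (hS : S.Finite) (hr : 1 < r) {D : ℕ}
    (hD : ∀ x, ((labGraph S lab).neighborSet x).ncard ≤ D) :
    (goodCore S lab r)ᶜ.ncard
      ≤ (1 + S.ncard) * (D + 1) ^ r * {u | ¬ballIso S lab u r}.ncard := by
  have hsub : (goodCore S lab r)ᶜ
      ⊆ ⋃ u ∈ {u | ¬IsGoodVertex S lab r u}, (labGraph S lab).ball u r := by
    intro x hx
    obtain ⟨u, hu, hbad⟩ : ∃ u ∈ (labGraph S lab).ball x r, ¬IsGoodVertex S lab r u := by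
      simpa [goodCore] using hx
    exact Set.mem_biUnion hbad (mem_ball_comm.mp hu)
  calc _ ≤ {u | ¬IsGoodVertex S lab r u}.ncard * (D + 1) ^ r :=
        (Set.ncard_le_ncard hsub).trans <|
          (Set.toFinite _).ncard_biUnion_le_mul _ fun u _ => ncard_ball_le_pow _ hD u r
    _ ≤ (1 + S.ncard) * {u | ¬ballIso S lab u r}.ncard * (D + 1) ^ r :=
        Nat.mul_le_mul_right _ (ncard_not_isGoodVertex_le hS hr)
    _ = _ := by ring

end GoodCore

section Sofic

variable {Γ : Type*} [Group Γ] {S : Set Γ} {V : ℕ → Type*} {lab : ∀ n, Γ → V n → V n}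

theorem BSConv.tendsto_ncard_not_ballIso_div (h : BSConv S lab) (r : ℕ) :
    Tendsto (fun n => ({x | ¬ballIso S (lab n) x r}.ncard : ℝ) / Nat.card (V n)) atTop
      (𝓝 0) := by
  have hpos : ∀ᶠ n in atTop, (0 : ℝ) < (Nat.card {x : V n // ballIso S (lab n) x r} : ℝ)
      / Nat.card (V n) := (h r).eventually (lt_mem_nhds one_pos)
  refine (tendsto_const_nhds.sub (h r)).congr' ?_ |>.trans (by rw [sub_self])
  filter_upwards [hpos] with n hn
  have hN : Nat.card (V n) ≠ 0 := fun h0 => by simp [h0] at hn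
  have := Nat.finite_of_card_ne_zero hN
  have hsplit : (Nat.card {x : V n // ballIso S (lab n) x r} : ℝ)
      + {x | ¬ballIso S (lab n) x r}.ncard = Nat.card (V n) := by
    have hgood : Nat.card {x : V n // ballIso S (lab n) x r} = {x | ballIso S (lab n) x r}.ncard :=
      Nat.card_coe_set_eq _
    rw [hgood]
    exact_mod_cast Set.ncard_add_ncard_compl {x | ballIso S (lab n) x r}
  have hN' : (Nat.card (V n) : ℝ) ≠ 0 := by exact_mod_cast hN
  rw [eq_div_iff hN', sub_mul, one_mul, div_mul_cancel₀ _ hN']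
  linarith

theorem GraphSeq.ncard_div_card_le_degBound (Gs : GraphSeq V) {n : ℕ} {E : Set (Sym2 (V n))}
    (hE : E ⊆ (Gs.G n).edgeSet) : (E.ncard : ℝ) / Nat.card (V n) ≤ Gs.degBound := by
  have := Gs.finite n
  refine div_le_of_le_mul₀ (Nat.cast_nonneg _) (Nat.cast_nonneg _) ?_
  rw [mul_comm]
  exact_mod_cast (Set.ncard_le_ncard hE).trans (ncard_edgeSet_le_mul _ (Gs.deg_le n))

variable {r : ℕ}

theorem IsSoficApprox.tendsto_ncard_goodCore_compl_div {Gs : GraphSeq V} (hS : S.Finite)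
    (h : IsSoficApprox S Gs lab) (hr : 1 < r) :
    Tendsto (fun n => ((goodCore S (lab n) r)ᶜ.ncard : ℝ) / Nat.card (V n)) atTop (𝓝 0) := by
  have hbad := (h.2.tendsto_ncard_not_ballIso_div r).const_mul
    (((1 + S.ncard) * (Gs.degBound + 1) ^ r : ℕ) : ℝ)
  rw [mul_zero] at hbad
  refine squeeze_zero (fun n => by positivity) (fun n => ?_) hbad
  have := Gs.finite n
  rw [← mul_div_assoc]
  gcongr
  exact_mod_cast ncard_goodCore_compl_le hS hr fun x => h.1 n ▸ Gs.deg_le n x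

theorem IsSoficApprox.exists_mem_goodCore_ncard_edgeBoundary_lt {Gs : GraphSeq V} (hS : S.Finite)
    (h : IsSoficApprox S Gs lab) (hr : 1 < r) {E : ∀ n, Set (Sym2 (V n))}
    (hEG : ∀ n, E n ⊆ (Gs.G n).edgeSet) {δ : ℝ}
    (hE : limsup (fun n => ((E n).ncard : ℝ) / Nat.card (V n)) atTop < δ) :
    ∃ n, ∃ x ∈ goodCore S (lab n) r,
      ((edgeBoundary (labGraph S (lab n))
          {y | ((labGraph S (lab n)).deleteEdges (E n)).Reachable x y}).ncard : ℝ)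
        < 4 * δ * {y | ((labGraph S (lab n)).deleteEdges (E n)).Reachable x y}.ncard := by
  have hEn := eventually_lt_of_limsup_lt hE
    (isBoundedUnder_of ⟨_, fun n => Gs.ncard_div_card_le_degBound (hEG n)⟩)
  have hXn := (h.tendsto_ncard_goodCore_compl_div hS hr).eventually (gt_mem_nhds one_half_pos)
  obtain ⟨n, hEn, hXn, hN⟩ := (hEn.and (hXn.and (Gs.card_tendsto.eventually_gt_atTop 0))).exists
  have := Gs.finite n
  set X := goodCore S (lab n) r
  have hN' : (0 : ℝ) < Nat.card (V n) := by exact_mod_cast hN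
  have hsplit : (X.ncard : ℝ) + Xᶜ.ncard = Nat.card (V n) := by
    exact_mod_cast Set.ncard_add_ncard_compl X
  rw [div_lt_iff₀ hN'] at hEn hXn
  have hXpos : (0 : ℝ) < X.ncard := by linarith
  have hEX : ((E n).ncard : ℝ) < 2 * δ * X.ncard := by
    nlinarith [show (Nat.card (V n) : ℝ) < 2 * X.ncard by linarith,
      (E n).ncard.cast_nonneg (α := ℝ)]
  obtain ⟨x, hx, hbdry⟩ := exists_mem_ncard_edgeBoundary_mul_le (labGraph S (lab n)) (E n)
    (Set.nonempty_of_ncard_ne_zero (by exact_mod_cast hXpos.ne'))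
  have hC : (0 : ℝ) < {y | ((labGraph S (lab n)).deleteEdges (E n)).Reachable x y}.ncard := by
    exact_mod_cast (Set.ncard_pos (Set.toFinite _)).mpr ⟨x, Reachable.refl x⟩
  refine ⟨n, x, hx, lt_of_mul_lt_mul_right ?_ hXpos.le⟩
  nlinarith

end Sofic

theorem stmt12_general {Γ : Type} [Group Γ]
    (S : Set Γ) (hSfin : S.Finite)
    {V : ℕ → Type} (Gs : GraphSeq V) (lab : ∀ n, Γ → V n → V n)
    (hsofic : IsSoficApprox S Gs lab)
    (hhyp : Gs.hyperfinite) : FolnerAmenable S := by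
  intro ε hε
  obtain ⟨K, hK, E, hEG, hElim, hcomp⟩ := hhyp (ε / 8) (by positivity)
  obtain ⟨n, x₀, hx₀, hbdry⟩ :=
    hsofic.exists_mem_goodCore_ncard_edgeBoundary_lt hSfin (r := K + 1) (by omega) hEG hElim
  have := Gs.finite n
  have hCK := hcomp n x₀
  rw [hsofic.1 n] at hCK
  have hgood : ∀ u, ((labGraph S (lab n)).deleteEdges (E n)).Reachable x₀ u →
      IsGoodVertex S (lab n) (K + 1) u := fun u hu =>
    hx₀ u <| ball_mono (by exact_mod_cast hCK.trans K.le_succ) <|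
      hu.mem_ball_ncard (deleteEdges_le _)
  obtain ⟨F, hFfin, hFC, hF⟩ := exists_ncard_symmDiff_le_edgeBoundary (deleteEdges_le _)
    (hgood x₀ (Reachable.refl _)).1 (hCK.trans K.le_succ) fun u hu => (hgood u hu).2
  refine ⟨F, hFfin, Set.nonempty_of_ncard_ne_zero ?_, fun s hs => ?_⟩
  · rw [hFC]
    exact ((Set.ncard_pos (Set.toFinite _)).mpr ⟨x₀, Reachable.refl x₀⟩).ne'
  · calc ((symmDiff ((fun x => s * x) '' F) F).ncard : ℝ)
        ≤ 2 * (edgeBoundary (labGraph S (lab n))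
            {y | ((labGraph S (lab n)).deleteEdges (E n)).Reachable x₀ y}).ncard := by
          exact_mod_cast hF s hs
      _ < 2 * (4 * (ε / 8) * F.ncard) := by rw [hFC]; gcongr
      _ = ε * F.ncard := by ring

/-- If a sofic approximation of a finitely generated group is hyperfinite, then the group
is amenable. -/
theorem stmt12 {Γ : Type} [Group Γ]
    (S : Set Γ) (hSfin : S.Finite) (hSgen : Subgroup.closure S = ⊤)
    {V : ℕ → Type} (Gs : GraphSeq V) (lab : ∀ n, Γ → V n → V n)
    (hsofic : IsSoficApprox S Gs lab)
    (hhyp : Gs.hyperfinite) : FolnerAmenable S :=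
  stmt12_general S hSfin Gs lab hsofic hhyp
end
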